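/- arXiv:2310.06343 — 2 statements merged into one kernel-verified Lean document; each statement's English description precedes it below -/
import Mathlib

section
/- The Gibbs measure π★ = μ.withDensity (fun ω => ENNReal.ofReal (Real.exp (Q ω / λ) / Z)) is a probability measure with KL(π★‖μ) finite, and it attains ∫ Q dπ★ − λ * (KL(π★‖μ)).toReal = λ * Real.log Z; hence π★ maximizes π ↦ ∫ Q dπ − λ * (KL(π‖μ)).toReal over all probability measures π with finite Kullback–Leibler divergence from μ. -/
/-! With `f = Q / λ` the Gibbs measure is the exponentially tilted measure `μ.tilted f`, and the
chain rule for log-likelihood ratios gives, for every probability measure `π ≪ μ`,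
`∫ f dπ - KL(π‖μ) = log Z - KL(π‖μ.tilted f)`. By Gibbs' inequality the right-hand side is at
most `log Z`, with equality for `π = μ.tilted f`; multiplying by `λ > 0` gives the theorem. -/

open MeasureTheory

open Classical in
/-- The Kullback–Leibler divergence of `π` from `μ`, valued in `[0,∞]`: the integral of the
logarithm of the Radon–Nikodym density when `π ≪ μ` with integrable log-density, and `∞`
otherwise. -/
noncomputable def klDiv {Ω : Type*} [MeasurableSpace Ω] (π μ : Measure Ω) : ENNReal :=
  if π ≪ μ ∧ Integrable (llr π μ) π then ENNReal.ofReal (∫ ω, llr π μ ω ∂π) else ⊤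

lemma klDiv_eq_informationTheory_klDiv {Ω : Type*} [MeasurableSpace Ω] {ν μ : Measure Ω}
    (h : ν Set.univ = μ Set.univ) : klDiv ν μ = InformationTheory.klDiv ν μ := by
  by_cases hνμ : ν ≪ μ ∧ Integrable (llr ν μ) ν
  · rw [klDiv, if_pos hνμ, InformationTheory.klDiv_of_ac_of_integrable hνμ.1 hνμ.2,
      measureReal_def, measureReal_def, h, add_sub_cancel_right]
  · rw [klDiv, if_neg hνμ, eq_comm, InformationTheory.klDiv_eq_top_iff]
    exact fun hac hint => hνμ ⟨hac, hint⟩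

section Tilted

open Real

variable {Ω : Type*} [MeasurableSpace Ω] {μ : Measure Ω} {f : Ω → ℝ}

lemma llr_tilted_self_ae_eq [SigmaFinite μ] (hexp : Integrable (fun x => exp (f x)) μ) :
    llr (μ.tilted f) μ =ᵐ[μ.tilted f] fun x => f x - log (∫ z, exp (f z) ∂μ) := by
  have hf : AEMeasurable f μ :=
    hexp.aemeasurable.log.congr (ae_of_all _ fun x => log_exp (f x))
  refine (tilted_absolutelyContinuous μ f).ae_le ?_
  filter_upwards [llr_tilted_left .rfl hexp hf, llr_self μ] with x hx hx0
  rw [hx, hx0, Pi.zero_apply, add_zero]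

lemma integrable_llr_tilted_self [SigmaFinite μ] (hexp : Integrable (fun x => exp (f x)) μ)
    (hf : Integrable f (μ.tilted f)) : Integrable (llr (μ.tilted f) μ) (μ.tilted f) :=
  (integrable_congr (llr_tilted_self_ae_eq hexp)).mpr (hf.sub (integrable_const _))

lemma klDiv_tilted_ne_top [SigmaFinite μ] (hexp : Integrable (fun x => exp (f x)) μ)
    (hf : Integrable f (μ.tilted f)) : klDiv (μ.tilted f) μ ≠ ⊤ := by
  rw [klDiv, if_pos ⟨tilted_absolutelyContinuous μ f, integrable_llr_tilted_self hexp hf⟩]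
  exact ENNReal.ofReal_ne_top

lemma integral_sub_toReal_klDiv_tilted [IsProbabilityMeasure μ]
    (hexp : Integrable (fun x => exp (f x)) μ) (hf : Integrable f (μ.tilted f)) :
    ∫ x, f x ∂(μ.tilted f) - (klDiv (μ.tilted f) μ).toReal = log (∫ x, exp (f x) ∂μ) := by
  have := isProbabilityMeasure_tilted hexp
  rw [klDiv_eq_informationTheory_klDiv (by simp),
    InformationTheory.toReal_klDiv_of_measure_eq (tilted_absolutelyContinuous μ f) (by simp),
    integral_congr_ae (llr_tilted_self_ae_eq hexp), integral_sub hf (integrable_const _)]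
  simp only [integral_const, probReal_univ, smul_eq_mul, one_mul, sub_sub_cancel]

lemma integral_sub_toReal_klDiv_le_log_integral_exp [IsProbabilityMeasure μ] {ν : Measure Ω}
    [IsProbabilityMeasure ν] (hkl : klDiv ν μ ≠ ⊤) (hf : Integrable f ν)
    (hexp : Integrable (fun x => exp (f x)) μ) :
    ∫ x, f x ∂ν - (klDiv ν μ).toReal ≤ log (∫ x, exp (f x) ∂μ) := by
  have := isProbabilityMeasure_tilted hexp
  rw [klDiv_eq_informationTheory_klDiv (by simp)] at hkl ⊢
  obtain ⟨hνμ, hllr⟩ := InformationTheory.klDiv_ne_top_iff.mp hkl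
  have hν_tilted : ν ≪ μ.tilted f := hνμ.trans (absolutelyContinuous_tilted hexp)
  have gibbs := InformationTheory.integral_llr_add_sub_measure_univ_nonneg hν_tilted
    (integrable_llr_tilted_right hνμ hf hllr hexp)
  rw [integral_llr_tilted_right hνμ hf hexp hllr] at gibbs
  rw [InformationTheory.toReal_klDiv_of_measure_eq hνμ (by simp)]
  simp only [probReal_univ, add_sub_cancel_right] at gibbs
  linarith

end Tilted

/-- The Gibbs measure `π★ = μ.withDensity (fun ω => ENNReal.ofReal (exp (Q ω / λ) / Z))` is a
probability measure with finite KL divergence from `μ`, attains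
`∫ Q dπ★ − λ * KL(π★‖μ) = λ * log Z`, and maximizes `π ↦ ∫ Q dπ − λ * KL(π‖μ)` over all
probability measures `π` with finite Kullback–Leibler divergence from `μ`,
where `Z = ∫ exp (Q ω / λ) ∂μ`. -/
theorem gibbs_measure_maximizes_kl_regularized_objective
    {Ω : Type*} [MeasurableSpace Ω]
    (μ : Measure Ω) [IsProbabilityMeasure μ]
    (Q : Ω → ℝ) (hQmeas : Measurable Q) (C : ℝ) (hQbdd : ∀ ω, |Q ω| ≤ C)
    (lam : ℝ) (hlam : 0 < lam)
    (Z : ℝ) (hZ : Z = ∫ ω, Real.exp (Q ω / lam) ∂μ)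
    (pstar : Measure Ω)
    (hpstar : pstar = μ.withDensity (fun ω => ENNReal.ofReal (Real.exp (Q ω / lam) / Z))) :
    IsProbabilityMeasure pstar ∧ klDiv pstar μ ≠ ⊤ ∧
    ((∫ ω, Q ω ∂pstar) - lam * (klDiv pstar μ).toReal = lam * Real.log Z) ∧
    (∀ π : Measure Ω, IsProbabilityMeasure π → klDiv π μ ≠ ⊤ →
      (∫ ω, Q ω ∂π) - lam * (klDiv π μ).toReal
        ≤ (∫ ω, Q ω ∂pstar) - lam * (klDiv pstar μ).toReal) := by
  set f : Ω → ℝ := fun ω => Q ω / lam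
  have hf_bdd : ∀ ω, ‖f ω‖ ≤ C / lam := fun ω => by
    rw [Real.norm_eq_abs, abs_div, abs_of_pos hlam]
    exact div_le_div_of_nonneg_right (hQbdd ω) hlam.le
  have hf : ∀ (ν : Measure Ω) [IsFiniteMeasure ν], Integrable f ν := fun ν _ =>
    .of_bound (hQmeas.div_const lam).aestronglyMeasurable _ (ae_of_all _ hf_bdd)
  have hexp : Integrable (fun ω => Real.exp (f ω)) μ :=
    .of_bound (hQmeas.div_const lam).exp.aestronglyMeasurable (Real.exp (C / lam)) <|
      ae_of_all _ fun ω => by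
        rw [Real.norm_eq_abs, abs_of_pos (Real.exp_pos _), Real.exp_le_exp]
        exact (le_abs_self _).trans (hf_bdd ω)
  have hps : pstar = μ.tilted f := by rw [hpstar, hZ]; rfl
  have := isProbabilityMeasure_tilted hexp
  have hscale : ∀ ν : Measure Ω, ∫ ω, Q ω ∂ν - lam * (klDiv ν μ).toReal
      = lam * (∫ ω, f ω ∂ν - (klDiv ν μ).toReal) := fun ν => by
    rw [integral_div, mul_sub, mul_div_cancel₀ _ hlam.ne']
  have h_attain : ∫ ω, Q ω ∂pstar - lam * (klDiv pstar μ).toReal = lam * Real.log Z := by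
    rw [hscale, hps, integral_sub_toReal_klDiv_tilted hexp (hf _), hZ]
  refine ⟨hps ▸ this, hps ▸ klDiv_tilted_ne_top hexp (hf _), h_attain, fun ν _ hν => ?_⟩
  rw [h_attain, hscale, hZ]
  exact mul_le_mul_of_nonneg_left
    (integral_sub_toReal_klDiv_le_log_integral_exp hν (hf ν) hexp) hlam.le
end

section
/- If in addition p is continuous with compact support, then for every x ∈ E the score of the smoothed density satisfies gradient (fun y => Real.log (p_k y)) x = −(1/k^2) • (x − m x), where m x = (p_k x)⁻¹ • ∫ (p a * φ_k (x − a)) • a ∂a is the posterior mean of the clean sample a given the noised sample x (this is Eq. (24): ∇ log p^k(a^k) = −E[(a^k − a)/k² | a^k]; the expression is well defined since p_k x > 0). -/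
/-!
Differentiating under the integral sign is legitimate because the gradient `-(k²)⁻¹ φ_k(y) y` of
the Gaussian is bounded (as `t e^{-t²/(2k²)} ≤ k`) and `p` is integrable; it gives
`∇p_k(x) = -(k²)⁻¹ ∫ p(a) φ_k(x - a) (x - a) da = -(k²)⁻¹ (p_k(x) x - ∫ p(a) φ_k(x - a) a da)`.
Since `φ_k > 0` and `∫ p = 1`, `p_k(x) > 0`, so the chain rule for `log` divides this by `p_k(x)`.
-/

open MeasureTheory InnerProductSpace Real

theorem mul_exp_neg_sq_div_le {k : ℝ} (hk : 0 < k) (t : ℝ) :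
    t * exp (-t ^ 2 / (2 * k ^ 2)) ≤ k := by
  have h_one_add : t ≤ k * (1 + t ^ 2 / (2 * k ^ 2)) := by
    have h_gap : k * (1 + t ^ 2 / (2 * k ^ 2)) - t = (k - t) ^ 2 / (2 * k) + k / 2 := by
      field_simp
      ring
    nlinarith [div_nonneg (sq_nonneg (k - t)) (by positivity : (0 : ℝ) ≤ 2 * k)]
  have h_exp : t ≤ k * exp (t ^ 2 / (2 * k ^ 2)) :=
    h_one_add.trans (by gcongr; linarith [add_one_le_exp (t ^ 2 / (2 * k ^ 2))])
  rwa [neg_div, exp_neg, ← div_eq_mul_inv, div_le_iff₀ (exp_pos _)]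

theorem integral_mul_pos_of_integral_pos {α : Type*} [MeasurableSpace α] {μ : Measure α}
    {f g : α → ℝ} (hf : 0 ≤ f) (hf_pos : 0 < ∫ a, f a ∂μ) (hg : ∀ a, 0 < g a)
    (hfg : Integrable (fun a => f a * g a) μ) : 0 < ∫ a, f a * g a ∂μ := by
  have hsupp : Function.support (fun a => f a * g a) = Function.support f := by
    ext a
    simp [(hg a).ne']
  rw [integral_pos_iff_support_of_nonneg (fun a => mul_nonneg (hf a) (hg a).le) hfg, hsupp]
  exact (integral_pos_iff_support_of_nonneg hf (.of_integral_ne_zero hf_pos.ne')).1 hf_pos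

theorem integral_smul_sub {E : Type*} [NormedAddCommGroup E] [NormedSpace ℝ E] [CompleteSpace E]
    [MeasurableSpace E] {μ : Measure E} {w : E → ℝ} {x : E} (hw : Integrable w μ)
    (hwx : Integrable (fun a => w a • (x - a)) μ) :
    ∫ a, w a • (x - a) ∂μ = (∫ a, w a ∂μ) • x - ∫ a, w a • a ∂μ := by
  have hwa : Integrable (fun a => w a • a) μ := by
    refine ((hw.smul_const x).sub hwx).congr (ae_of_all _ fun a => ?_)
    simp [smul_sub]
  simp only [smul_sub, integral_sub (hw.smul_const x) hwa, integral_smul_const]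

theorem HasGradientAt.log {E : Type*} [NormedAddCommGroup E] [InnerProductSpace ℝ E]
    [CompleteSpace E] {f : E → ℝ} {f' x : E} (hf : HasGradientAt f f' x) (hx : f x ≠ 0) :
    HasGradientAt (fun y => Real.log (f y)) ((f x)⁻¹ • f') x := by
  rw [hasGradientAt_iff_hasFDerivAt, map_smul]
  exact hf.hasFDerivAt.log hx

section Gaussian

variable {E : Type*} [NormedAddCommGroup E]

noncomputable def gaussian (c k : ℝ) (y : E) : ℝ := c * exp (-‖y‖ ^ 2 / (2 * k ^ 2))

variable {c k : ℝ}

@[fun_prop]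
theorem continuous_gaussian : Continuous (gaussian (E := E) c k) := by
  unfold gaussian
  fun_prop

theorem gaussian_pos (hc : 0 < c) (y : E) : 0 < gaussian c k y := by
  unfold gaussian
  positivity

theorem norm_gaussian_le (hc : 0 ≤ c) (y : E) : ‖gaussian c k y‖ ≤ c := by
  rw [gaussian, Real.norm_of_nonneg (by positivity)]
  refine mul_le_of_le_one_right hc (exp_le_one_iff.2 ?_)
  exact div_nonpos_of_nonpos_of_nonneg (neg_nonpos.2 (sq_nonneg _)) (by positivity)

variable [InnerProductSpace ℝ E]

theorem norm_gaussian_smul_le (hc : 0 ≤ c) (hk : 0 < k) (y : E) :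
    ‖gaussian c k y • y‖ ≤ c * k := by
  rw [gaussian, norm_smul, Real.norm_of_nonneg (by positivity), mul_assoc, mul_comm (exp _)]
  exact mul_le_mul_of_nonneg_left (mul_exp_neg_sq_div_le hk ‖y‖) hc

theorem hasGradientAt_gaussian [CompleteSpace E] (y : E) :
    HasGradientAt (gaussian c k) (-(k ^ 2)⁻¹ • gaussian c k y • y) y := by
  have h := ((hasStrictFDerivAt_norm_sq y).hasFDerivAt.const_mul (-(2 * k ^ 2)⁻¹)).exp.const_mul c
  simp only [neg_mul, ← neg_div, inv_mul_eq_div] at h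
  refine h.congr_fderiv ?_
  ext w
  simp only [mul_inv_rev, neg_smul, smul_neg, neg_apply, smul_apply, coe_innerSL_apply,
    nsmul_eq_mul, Nat.cast_ofNat, smul_eq_mul, gaussian, map_neg, map_smul, toDual_apply_apply,
    neg_inj]
  ring

end Gaussian

section Convolution

variable {E : Type*} [NormedAddCommGroup E] [MeasurableSpace E] [OpensMeasurableSpace E]
  [SecondCountableTopology E] {μ : Measure E}

theorem MeasureTheory.Integrable.smul_comp_sub {F : Type*} [NormedAddCommGroup F]
    [NormedSpace ℝ F] {p : E → ℝ} {f : E → F} {C : ℝ} (hp : Integrable p μ) (hf : Continuous f)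
    (hf_le : ∀ y, ‖f y‖ ≤ C) (x : E) : Integrable (fun a => p a • f (x - a)) μ :=
  hp.smul_bdd C (hf.comp (continuous_const.sub continuous_id)).aestronglyMeasurable
    (ae_of_all _ fun a => hf_le (x - a))

theorem hasGradientAt_integral_mul_comp_sub [InnerProductSpace ℝ E] [CompleteSpace E]
    {p g : E → ℝ} {g' : E → E} {C : ℝ} (hp : Integrable p μ)
    (hg : ∀ y, HasGradientAt g (g' y) y) (hg' : Continuous g') (hg'_le : ∀ y, ‖g' y‖ ≤ C)
    {x : E} (hint : Integrable (fun a => p a * g (x - a)) μ) :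
    HasGradientAt (fun x => ∫ a, p a * g (x - a) ∂μ) (∫ a, p a • g' (x - a) ∂μ) x := by
  have hg_cont : Continuous g := continuous_iff_continuousAt.2 fun y => (hg y).continuousAt
  have hcomm : ∫ a, toDual ℝ E (p a • g' (x - a)) ∂μ = toDual ℝ E (∫ a, p a • g' (x - a) ∂μ) :=
    (toDual ℝ E).toContinuousLinearEquiv.toContinuousLinearMap.integral_comp_commSL (by simp)
      (hp.smul_comp_sub hg' hg'_le x)
  rw [hasGradientAt_iff_hasFDerivAt, ← hcomm]
  refine hasFDerivAt_integral_of_dominated_of_fderiv_le (F := fun x a => p a * g (x - a))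
    (F' := fun x a => toDual ℝ E (p a • g' (x - a))) (bound := fun a => ‖p a‖ * C)
    Filter.univ_mem (.of_forall fun y => ?meas) hint ?meas' (ae_of_all _ fun a y _ => ?bound)
    (hp.norm.mul_const C) (ae_of_all _ fun a y _ => ?deriv)
  case meas =>
    exact hp.aestronglyMeasurable.mul
      (hg_cont.comp (continuous_const.sub continuous_id)).aestronglyMeasurable
  case meas' =>
    exact (toDual ℝ E).continuous.comp_aestronglyMeasurable
      (hp.smul_comp_sub hg' hg'_le x).aestronglyMeasurable
  case bound =>
    rw [LinearIsometryEquiv.norm_map, norm_smul]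
    gcongr
    exact hg'_le _
  case deriv =>
    rw [map_smul]
    exact ((hasFDerivAt_comp_sub a).2 (hg (y - a)).hasFDerivAt).const_mul (p a)

theorem hasGradientAt_integral_mul_gaussian [InnerProductSpace ℝ E] [CompleteSpace E]
    {p : E → ℝ} {c k : ℝ} (hc : 0 ≤ c) (hk : 0 < k) (hp : Integrable p μ) (x : E) :
    HasGradientAt (fun x => ∫ a, p a * gaussian c k (x - a) ∂μ)
      (-(k ^ 2)⁻¹ • ((∫ a, p a * gaussian c k (x - a) ∂μ) • x -
        ∫ a, (p a * gaussian c k (x - a)) • a ∂μ)) x := by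
  have hint : Integrable (fun a => p a * gaussian c k (x - a)) μ :=
    hp.smul_comp_sub continuous_gaussian (norm_gaussian_le hc) x
  have hint_sub : Integrable (fun a => (p a * gaussian c k (x - a)) • (x - a)) μ := by
    simpa only [smul_smul] using hp.smul_comp_sub (by fun_prop) (norm_gaussian_smul_le hc hk) x
  have hgrad := hasGradientAt_integral_mul_comp_sub hp hasGradientAt_gaussian (by fun_prop)
    (fun y => (norm_smul_le _ _).trans
      (mul_le_mul_of_nonneg_left (norm_gaussian_smul_le hc hk y) (norm_nonneg _))) hint
  convert hgrad using 1
  calc -(k ^ 2)⁻¹ • ((∫ a, p a * gaussian c k (x - a) ∂μ) • x -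
        ∫ a, (p a * gaussian c k (x - a)) • a ∂μ)
      = ∫ a, -(k ^ 2)⁻¹ • ((p a * gaussian c k (x - a)) • (x - a)) ∂μ := by
        rw [integral_smul, integral_smul_sub hint hint_sub]
    _ = ∫ a, p a • (-(k ^ 2)⁻¹ • gaussian c k (x - a) • (x - a)) ∂μ := by
        refine integral_congr_ae (ae_of_all _ fun a => ?_)
        simp only [smul_comm (p a) (-(k ^ 2)⁻¹), smul_smul (p a)]

end Convolution

theorem gradient_log_gaussian_smoothed_density_general
    (n : ℕ) (k : ℝ) (hk : 0 < k)
    (φ : EuclideanSpace ℝ (Fin n) → ℝ)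
    (hφ : ∀ x, φ x = (2 * Real.pi * k ^ 2) ^ (-(n : ℝ) / 2) *
        Real.exp (-‖x‖ ^ 2 / (2 * k ^ 2)))
    (p : EuclideanSpace ℝ (Fin n) → ℝ)
    (hpnonneg : ∀ a, 0 ≤ p a) (hpint : ∫ a, p a = 1)
    (pk : EuclideanSpace ℝ (Fin n) → ℝ)
    (hpk : ∀ x, pk x = ∫ a, p a * φ (x - a))
    (m : EuclideanSpace ℝ (Fin n) → EuclideanSpace ℝ (Fin n))
    (hm : ∀ x, m x = (pk x)⁻¹ • ∫ a, (p a * φ (x - a)) • a) :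
    ∀ x : EuclideanSpace ℝ (Fin n),
      gradient (fun y => Real.log (pk y)) x = -(1 / k ^ 2) • (x - m x) := by
  intro x
  set c : ℝ := (2 * Real.pi * k ^ 2) ^ (-(n : ℝ) / 2)
  have hc : 0 < c := by positivity
  obtain rfl : φ = gaussian c k := funext hφ
  -- a non-integrable function has integral `0`
  have hp : Integrable p := .of_integral_ne_zero (by simp [hpint])
  have hgrad := hasGradientAt_integral_mul_gaussian hc.le hk hp x
  rw [← funext hpk, ← hpk] at hgrad
  have hpos : 0 < pk x := by
    rw [hpk]
    exact integral_mul_pos_of_integral_pos hpnonneg (by simp [hpint]) (fun a => gaussian_pos hc _)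
      (hp.smul_comp_sub continuous_gaussian (norm_gaussian_le hc.le) x)
  rw [(hgrad.log hpos.ne').gradient, hm, smul_comm, smul_sub, smul_smul,
    inv_mul_cancel₀ hpos.ne', one_smul, one_div]

/-- Score of the Gaussian-smoothed density (Eq. (24)): if the probability density `p` is
continuous with compact support, then for every `x` the score of
`p_k(x) = ∫ p a * φ_k (x − a) ∂a` satisfies
`∇ log p_k x = −(1/k²) • (x − m x)`, where
`m x = (p_k x)⁻¹ • ∫ (p a * φ_k (x − a)) • a ∂a` is the posterior mean of the clean sample
given the noised sample `x`; i.e. `∇ log p^k(a^k) = −E[(a^k − a)/k² | a^k]`. -/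
theorem gradient_log_gaussian_smoothed_density
    (n : ℕ) (hn : 0 < n) (k : ℝ) (hk : 0 < k)
    (φ : EuclideanSpace ℝ (Fin n) → ℝ)
    (hφ : ∀ x, φ x = (2 * Real.pi * k ^ 2) ^ (-(n : ℝ) / 2) *
        Real.exp (-‖x‖ ^ 2 / (2 * k ^ 2)))
    (p : EuclideanSpace ℝ (Fin n) → ℝ)
    (hpmeas : Measurable p) (hpnonneg : ∀ a, 0 ≤ p a) (hpint : ∫ a, p a = 1)
    (hpcont : Continuous p) (hpsupp : HasCompactSupport p)
    (pk : EuclideanSpace ℝ (Fin n) → ℝ)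
    (hpk : ∀ x, pk x = ∫ a, p a * φ (x - a))
    (m : EuclideanSpace ℝ (Fin n) → EuclideanSpace ℝ (Fin n))
    (hm : ∀ x, m x = (pk x)⁻¹ • ∫ a, (p a * φ (x - a)) • a) :
    ∀ x : EuclideanSpace ℝ (Fin n),
      gradient (fun y => Real.log (pk y)) x = -(1 / k ^ 2) • (x - m x) :=
  gradient_log_gaussian_smoothed_density_general n k hk φ hφ p hpnonneg hpint pk hpk m hm
end
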